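/- Let X_1 = {(0,1), (0,−1)} and X_2 = {(1,0), (−1,0)} in ℝ² (so k = 2, N = 4), and let the mixing measure μ be Lebesgue measure restricted to [0,1] (the uniform distribution). Then: (i) there exists ε₀ > 0 such that for all ε ∈ (0, ε₀], h_ε^1((0,0)) = 1/2; and (ii) for every t with 0 < |t| < 1, there exists ε₀ > 0 such that for all ε ∈ (0, ε₀], h_ε^1((0, t)) = 1. Consequently the pointwise limit classifier h(x) = lim_{ε→0⁺} h_ε(x) exists at these points, equals (1/2, 1/2) at the origin and (1, 0) on the rest of the open segment between (0,1) and (0,−1), and is therefore discontinuous at (0,0). -/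

import Mathlib

/-!
Fix `(0, t)` with `|t| < 1`. Every segment joining a point of `X₁` to a point of `X₂`, and
every degenerate segment `[s, s]`, stays at distance at least `(1 - |t|) / 2` from `(0, t)`;
the segment joining the two points of `X₂` stays at distance `|t|`. So for small `ε` all
cross-class terms vanish and `h_ε^i` is the share of the within-class mass `ξ^{i,i}`, to which
each ordered pair of opposite unit vectors whose segment passes through the point contributes
`ε`. Off the origin only `X₁` has such a pair, so `h_ε = (1, 0)`; at the origin both classes
do, so `h_ε = (1/2, 1/2)`. The limit classifier thus jumps from `1/2` to `1` along the segment.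
-/

open MeasureTheory

noncomputable section

variable {E : Type*} [NormedAddCommGroup E] [NormedSpace ℝ E]

/-- The set of mixing coefficients `λ ∈ [0,1]` for which the mixed point
`λ • s + (1 - λ) • t` lies within distance `ε` of `x`. -/
def mixSet (s t x : E) (ε : ℝ) : Set ℝ :=
  {l : ℝ | l ∈ Set.Icc (0 : ℝ) 1 ∧ ‖l • s + (1 - l) • t - x‖ < ε}

/-- `ξ^{i,j}_{x,ε}`: the (normalized) measure of pairs and coefficients mixing
a point of `Xi` with a point of `Xj` into the `ε`-ball around `x`. -/
def xiMeas (μ : Measure ℝ) (N : ℕ) (Xi Xj : Finset E) (x : E) (ε : ℝ) : ℝ :=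
  (1 / (N : ℝ) ^ 2) * ∑ s ∈ Xi, ∑ t ∈ Xj, (μ (mixSet s t x ε)).toReal

/-- `ξ^{i,j}_{x,ε,λ}`: the corresponding expectation of `λ`. -/
def xiLam (μ : Measure ℝ) (N : ℕ) (Xi Xj : Finset E) (x : E) (ε : ℝ) : ℝ :=
  (1 / (N : ℝ) ^ 2) * ∑ s ∈ Xi, ∑ t ∈ Xj, ∫ l in mixSet s t x ε, l ∂μ

/-- Numerator of the Mixup-optimal local classifier value `h_ε^i(x)`. -/
def hNum {k : ℕ} (μ : Measure ℝ) (N : ℕ) (X : Fin k → Finset E) (i : Fin k)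
    (x : E) (ε : ℝ) : ℝ :=
  xiMeas μ N (X i) (X i) x ε +
    ∑ j ∈ Finset.univ.filter (fun j => j ≠ i),
      (xiLam μ N (X i) (X j) x ε +
        (xiMeas μ N (X j) (X i) x ε - xiLam μ N (X j) (X i) x ε))

/-- Denominator of the Mixup-optimal local classifier value. -/
def hDen {k : ℕ} (μ : Measure ℝ) (N : ℕ) (X : Fin k → Finset E) (x : E) (ε : ℝ) : ℝ :=
  ∑ q : Fin k, hNum μ N X q x ε

/-- The Mixup-optimal local classifier value `h_ε^i(x)`. -/
def hEps {k : ℕ} (μ : Measure ℝ) (N : ℕ) (X : Fin k → Finset E) (i : Fin k)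
    (x : E) (ε : ℝ) : ℝ :=
  hNum μ N X i x ε / hDen μ N X x ε

end

open MeasureTheory Filter

/-- The point `(a, b)` of the Euclidean plane. -/
noncomputable def pt (a b : ℝ) : EuclideanSpace ℝ (Fin 2) :=
  (WithLp.equiv 2 (Fin 2 → ℝ)).symm ![a, b]

/-- The dataset of Proposition 2: `X₁ = {(0,1), (0,-1)}`, `X₂ = {(1,0), (-1,0)}`. -/
noncomputable def Xcross : Fin 2 → Finset (EuclideanSpace ℝ (Fin 2)) :=
  letI := Classical.decEq (EuclideanSpace ℝ (Fin 2))
  ![{pt 0 1, pt 0 (-1)}, {pt 1 0, pt (-1) 0}]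

open Topology

local notation "𝒰" => volume.restrict (Set.Icc (0 : ℝ) 1)

section Mixing

variable {E : Type*} [NormedAddCommGroup E] [NormedSpace ℝ E]

lemma mix_sub_mix (s t : E) (l c : ℝ) :
    l • s + (1 - l) • t - (c • s + (1 - c) • t) = (l - c) • (s - t) := by
  simp only [sub_smul, smul_sub, one_smul]
  abel

lemma mixSet_mix_eq_Ioo {s t : E} (hst : s ≠ t) {c ε : ℝ} (hc₀ : ε / ‖s - t‖ ≤ c)
    (hc₁ : ε / ‖s - t‖ ≤ 1 - c) :
    mixSet s t (c • s + (1 - c) • t) ε = Set.Ioo (c - ε / ‖s - t‖) (c + ε / ‖s - t‖) := by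
  have hpos : 0 < ‖s - t‖ := norm_pos_iff.mpr (sub_ne_zero.mpr hst)
  ext l
  simp only [mixSet, Set.mem_ofPred_eq, mix_sub_mix, norm_smul, Real.norm_eq_abs,
    ← lt_div_iff₀ hpos, abs_lt, Set.mem_Icc, Set.mem_Ioo]
  constructor
  · rintro ⟨-, h₁, h₂⟩
    constructor <;> linarith
  · rintro ⟨h₁, h₂⟩
    refine ⟨⟨?_, ?_⟩, ?_, ?_⟩ <;> linarith

lemma uniform_mixSet_mix {s t : E} (hst : s ≠ t) {c ε : ℝ} (hε : 0 ≤ ε)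
    (hc₀ : ε / ‖s - t‖ ≤ c) (hc₁ : ε / ‖s - t‖ ≤ 1 - c) :
    (𝒰 (mixSet s t (c • s + (1 - c) • t) ε)).toReal = 2 * ε / ‖s - t‖ := by
  have hδ : 0 ≤ ε / ‖s - t‖ := div_nonneg hε (norm_nonneg _)
  have hsub : Set.Ioo (c - ε / ‖s - t‖) (c + ε / ‖s - t‖) ⊆ Set.Icc 0 1 :=
    Set.Ioo_subset_Icc_self.trans (Set.Icc_subset_Icc (by linarith) (by linarith))
  rw [mixSet_mix_eq_Ioo hst hc₀ hc₁, Measure.restrict_apply measurableSet_Ioo,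
    Set.inter_eq_left.mpr hsub, Real.volume_Ioo, ENNReal.toReal_ofReal (by linarith)]
  ring

lemma norm_sub_neg_self (s : E) : ‖s - -s‖ = 2 * ‖s‖ := by
  rw [sub_neg_eq_add, ← two_smul ℝ, norm_smul, Real.norm_two]

lemma ne_neg_of_norm_eq_one {s : E} (hs : ‖s‖ = 1) : s ≠ -s := fun h => by
  simpa [← h, hs] using norm_sub_neg_self s

lemma uniform_mixSet_neg {s : E} (hs : ‖s‖ = 1) {τ ε : ℝ} (hε : 0 ≤ ε) (hτε : ε ≤ 1 - |τ|) :
    (𝒰 (mixSet s (-s) (τ • s) ε)).toReal = ε := by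
  have hx : τ • s = ((1 + τ) / 2) • s + (1 - (1 + τ) / 2) • (-s) := by
    rw [smul_neg, ← sub_eq_add_neg, ← sub_smul]
    ring_nf
  rw [hx, uniform_mixSet_mix (ne_neg_of_norm_eq_one hs) hε] <;> rw [norm_sub_neg_self, hs]
  · ring
  all_goals linarith [le_abs_self τ, neg_abs_le τ]

lemma mixSet_self_eq_empty {s x : E} {ε : ℝ} (h : ε ≤ ‖s - x‖) : mixSet s s x ε = ∅ := by
  ext l
  simp only [mixSet, ← add_smul, add_sub_cancel, one_smul, Set.mem_ofPred_eq,
    Set.mem_empty_iff_false, iff_false, not_and, not_lt]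
  exact fun _ => h

lemma mixSet_eq_empty_of_le_dual {s t x : E} {ε : ℝ} (φ : StrongDual ℝ E) (hφ : ‖φ‖ ≤ 1)
    (hs : ε ≤ φ (s - x)) (ht : ε ≤ φ (t - x)) : mixSet s t x ε = ∅ := by
  refine Set.eq_empty_of_forall_notMem fun l ⟨⟨hl₀, hl₁⟩, hl⟩ => hl.not_ge ?_
  set v := l • s + (1 - l) • t - x
  have hv : v = l • (s - x) + (1 - l) • (t - x) := by
    simp only [v, smul_sub, sub_smul, one_smul]
    abel
  calc ε = l * ε + (1 - l) * ε := by ring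
    _ ≤ l * φ (s - x) + (1 - l) * φ (t - x) := by gcongr
    _ = φ v := by simp [hv]
    _ ≤ ‖φ v‖ := Real.le_norm_self _
    _ ≤ ‖φ‖ * ‖v‖ := φ.le_opNorm v
    _ ≤ ‖v‖ := mul_le_of_le_one_left (norm_nonneg v) hφ

lemma mixSet_eq_empty_of_apply_eq {ι : Type*} [Fintype ι] {s t x : EuclideanSpace ℝ ι}
    (i : ι) {c ε : ℝ} (hs : s i = c) (ht : t i = c) (h : ε ≤ |c - x i|) :
    mixSet s t x ε = ∅ := by
  refine Set.eq_empty_of_forall_notMem fun l ⟨_, hl⟩ => hl.not_ge ?_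
  calc ε ≤ |c - x i| := h
    _ = ‖(l • s + (1 - l) • t - x) i‖ := by simp [hs, ht, ← add_mul]
    _ ≤ ‖l • s + (1 - l) • t - x‖ := PiLp.norm_apply_le _ i

end Mixing

section Classifier

variable {E : Type*} [NormedAddCommGroup E] [NormedSpace ℝ E] (μ : Measure ℝ) (N : ℕ)

def NoCrossMixing {k : ℕ} (X : Fin k → Finset E) (x : E) (ε : ℝ) : Prop :=
  ∀ i j, i ≠ j → ∀ s ∈ X i, ∀ t ∈ X j, mixSet s t x ε = ∅

variable {Xi Xj : Finset E} {x : E} {ε : ℝ}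

lemma xiMeas_eq_zero (h : ∀ s ∈ Xi, ∀ t ∈ Xj, mixSet s t x ε = ∅) :
    xiMeas μ N Xi Xj x ε = 0 := by
  rw [xiMeas, Finset.sum_eq_zero fun s hs => Finset.sum_eq_zero fun t ht => by simp [h s hs t ht],
    mul_zero]

lemma xiLam_eq_zero (h : ∀ s ∈ Xi, ∀ t ∈ Xj, mixSet s t x ε = ∅) :
    xiLam μ N Xi Xj x ε = 0 := by
  rw [xiLam, Finset.sum_eq_zero fun s hs => Finset.sum_eq_zero fun t ht => by simp [h s hs t ht],
    mul_zero]

lemma hNum_eq_xiMeas {k : ℕ} {X : Fin k → Finset E} (h : NoCrossMixing X x ε) (i : Fin k) :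
    hNum μ N X i x ε = xiMeas μ N (X i) (X i) x ε := by
  rw [hNum, add_eq_left]
  refine Finset.sum_eq_zero fun j hj => ?_
  have hji : j ≠ i := (Finset.mem_filter.mp hj).2
  rw [xiLam_eq_zero μ N (h i j hji.symm), xiMeas_eq_zero μ N (h j i hji),
    xiLam_eq_zero μ N (h j i hji)]
  ring

lemma hEps_eq_of_noCrossMixing {k : ℕ} {X : Fin k → Finset E} (h : NoCrossMixing X x ε)
    (i : Fin k) :
    hEps μ N X i x ε = xiMeas μ N (X i) (X i) x ε / ∑ q, xiMeas μ N (X q) (X q) x ε := by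
  simp only [hEps, hDen, hNum_eq_xiMeas μ N h]

lemma xiMeas_pair_neg [DecidableEq E] {s : E} (hs : ‖s‖ = 1) {τ : ℝ} (hε : 0 ≤ ε)
    (hτε : ε ≤ 1 - |τ|) :
    xiMeas 𝒰 N {s, -s} {s, -s} (τ • s) ε = 2 * ε / N ^ 2 := by
  have hs' : ‖-s‖ = 1 := by rw [norm_neg, hs]
  have hAB := uniform_mixSet_neg hs hε hτε
  have hBA := uniform_mixSet_neg hs' (τ := -τ) hε (by rwa [abs_neg])
  rw [neg_neg, neg_smul_neg] at hBA
  have hself : ∀ σ : ℝ, |σ| = 1 → mixSet (σ • s) (σ • s) (τ • s) ε = ∅ := fun σ hσ =>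
    mixSet_self_eq_empty <| calc
      ε ≤ |σ| - |τ| := by rw [hσ]; exact hτε
      _ ≤ |σ - τ| := abs_sub_abs_le_abs_sub σ τ
      _ = ‖σ • s - τ • s‖ := by rw [← sub_smul, norm_smul, hs, mul_one, Real.norm_eq_abs]
  have hAA := hself 1 abs_one
  have hBB := hself (-1) (by simp)
  rw [one_smul] at hAA
  rw [neg_one_smul] at hBB
  have hne := ne_neg_of_norm_eq_one hs
  rw [xiMeas, Finset.sum_pair hne, Finset.sum_pair hne, Finset.sum_pair hne, hAB, hBA, hAA, hBB]
  simp only [measure_empty, ENNReal.toReal_zero]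
  ring

end Classifier

@[simp] lemma pt_apply_zero (a b : ℝ) : pt a b 0 = a := rfl
@[simp] lemma pt_apply_one (a b : ℝ) : pt a b 1 = b := rfl

lemma pt_zero_zero : pt 0 0 = 0 := by
  ext i; fin_cases i <;> rfl

lemma pt_neg (a b : ℝ) : pt (-a) (-b) = -pt a b := by
  ext i; fin_cases i <;> rfl

lemma pt_smul (c a b : ℝ) : c • pt a b = pt (c * a) (c * b) := by
  ext i; fin_cases i <;> rfl

lemma pt_sub (a b c d : ℝ) : pt a b - pt c d = pt (a - c) (b - d) := by
  ext i; fin_cases i <;> rfl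

lemma norm_pt (a b : ℝ) : ‖pt a b‖ = √(a ^ 2 + b ^ 2) := by
  simp [EuclideanSpace.norm_eq, Fin.sum_univ_two, sq_abs]

lemma inner_pt (a b c d : ℝ) : inner ℝ (pt a b) (pt c d) = a * c + b * d := by
  simp [PiLp.inner_apply, Fin.sum_univ_two, mul_comm]

lemma pt_zero_eq_smul (t : ℝ) : pt 0 t = t • pt 0 1 := by
  rw [pt_smul, mul_zero, mul_one]

lemma Xcross_zero : Xcross 0 = {pt 0 1, -pt 0 1} := by
  ext s
  simp [Xcross, ← pt_neg]

lemma Xcross_one : Xcross 1 = {pt 1 0, -pt 1 0} := by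
  ext s
  simp [Xcross, ← pt_neg]

lemma norm_pt_zero_one : ‖pt 0 1‖ = 1 := by simp [norm_pt]

lemma norm_pt_one_zero : ‖pt 1 0‖ = 1 := by simp [norm_pt]

lemma mixSet_pt_cross_eq_empty {b c t ε : ℝ} (hb : |b| = 1) (hc : |c| = 1)
    (hε : ε ≤ (1 - |t|) / 2) :
    mixSet (pt 0 b) (pt c 0) (pt 0 t) ε = ∅ ∧ mixSet (pt c 0) (pt 0 b) (pt 0 t) ε = ∅ := by
  have hb2 : b ^ 2 = 1 := by rw [← sq_abs, hb, one_pow]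
  have hc2 : c ^ 2 = 1 := by rw [← sq_abs, hc, one_pow]
  have hbt : b * t ≤ |t| := (le_abs_self _).trans_eq (by rw [abs_mul, hb, one_mul])
  -- `(c, b)` is normal to the line `c X + b Y = 1` through both endpoints.
  set φ := innerSL ℝ (pt (c / 2) (b / 2))
  have hφ : ‖φ‖ ≤ 1 := by
    rw [innerSL_apply_norm, norm_pt, div_pow, div_pow, hb2, hc2, Real.sqrt_le_one]
    norm_num
  have h₁ : ε ≤ φ (pt 0 b - pt 0 t) := by
    simp only [φ, innerSL_apply_apply, pt_sub, inner_pt]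
    nlinarith
  have h₂ : ε ≤ φ (pt c 0 - pt 0 t) := by
    simp only [φ, innerSL_apply_apply, pt_sub, inner_pt]
    nlinarith
  exact ⟨mixSet_eq_empty_of_le_dual φ hφ h₁ h₂, mixSet_eq_empty_of_le_dual φ hφ h₂ h₁⟩

lemma noCrossMixing_Xcross {t ε : ℝ} (hε : ε ≤ (1 - |t|) / 2) :
    NoCrossMixing Xcross (pt 0 t) ε := by
  have hcross : ∀ s ∈ Xcross 0, ∀ r ∈ Xcross 1,
      mixSet s r (pt 0 t) ε = ∅ ∧ mixSet r s (pt 0 t) ε = ∅ := by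
    simp only [Xcross_zero, Xcross_one, Finset.mem_insert, Finset.mem_singleton, ← pt_neg,
      neg_zero]
    rintro s (rfl | rfl) r (rfl | rfl) <;> exact mixSet_pt_cross_eq_empty (by simp) (by simp) hε
  intro i j hij s hs r hr
  match i, j, hij with
  | 0, 1, _ => exact (hcross s hs r hr).1
  | 1, 0, _ => exact (hcross r hr s hs).2
  | 0, 0, h => exact absurd rfl h
  | 1, 1, h => exact absurd rfl h

lemma hEps_Xcross_origin {ε : ℝ} (hε : 0 < ε) (hε₁ : ε ≤ 1 / 2) (i : Fin 2) :
    hEps 𝒰 4 Xcross i 0 ε = 1 / 2 := by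
  have hmass : ∀ q : Fin 2, xiMeas 𝒰 4 (Xcross q) (Xcross q) 0 ε = ε / 8 := by
    have hε' : ε ≤ 1 - |(0 : ℝ)| := by rw [abs_zero]; linarith
    refine Fin.forall_fin_two.2 ⟨?_, ?_⟩
    · rw [Xcross_zero, ← zero_smul ℝ (pt 0 1), xiMeas_pair_neg 4 norm_pt_zero_one hε.le hε']
      ring
    · rw [Xcross_one, ← zero_smul ℝ (pt 1 0), xiMeas_pair_neg 4 norm_pt_one_zero hε.le hε']
      ring
  have hcross : NoCrossMixing Xcross 0 ε := by
    rw [← pt_zero_zero]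
    exact noCrossMixing_Xcross (by rw [abs_zero]; linarith)
  rw [hEps_eq_of_noCrossMixing _ _ hcross, Fin.sum_univ_two, hmass, hmass, hmass]
  field_simp
  norm_num

lemma hEps_Xcross_segment {t ε : ℝ} (hε : 0 < ε) (hεt : ε ≤ |t|) (hε₁ : ε ≤ (1 - |t|) / 2) :
    hEps 𝒰 4 Xcross 0 (pt 0 t) ε = 1 ∧ hEps 𝒰 4 Xcross 1 (pt 0 t) ε = 0 := by
  have hmass₀ : xiMeas 𝒰 4 (Xcross 0) (Xcross 0) (pt 0 t) ε = ε / 8 := by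
    rw [Xcross_zero, pt_zero_eq_smul t, xiMeas_pair_neg 4 norm_pt_zero_one hε.le (by linarith)]
    ring
  have hmass₁ : xiMeas 𝒰 4 (Xcross 1) (Xcross 1) (pt 0 t) ε = 0 := by
    have hX : ∀ s ∈ Xcross 1, s 1 = 0 := by simp [Xcross_one, ← pt_neg]
    exact xiMeas_eq_zero _ _ fun s hs r hr =>
      mixSet_eq_empty_of_apply_eq 1 (hX s hs) (hX r hr) (by simpa using hεt)
  rw [hEps_eq_of_noCrossMixing _ _ (noCrossMixing_Xcross hε₁),
    hEps_eq_of_noCrossMixing _ _ (noCrossMixing_Xcross hε₁), Fin.sum_univ_two, hmass₀, hmass₁]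
  simp [hε.ne']

lemma limUnder_nhdsGT_eq {α : Type*} [TopologicalSpace α] [T2Space α] [Nonempty α]
    {f : ℝ → α} {a b : ℝ} {c : α} (hab : a < b) (h : ∀ ε ∈ Set.Ioo a b, f ε = c) :
    limUnder (𝓝[>] a) f = c :=
  (tendsto_const_nhds.congr' (eventuallyEq_of_mem (Ioo_mem_nhdsGT hab) fun ε hε =>
    (h ε hε).symm)).limUnder_eq

lemma not_continuousAt_of_eq_on_ray {E α : Type*} [NormedAddCommGroup E] [NormedSpace ℝ E]
    [TopologicalSpace α] [T2Space α] {f : E → α} {x v : E} {δ : ℝ} {b : α} (hδ : 0 < δ)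
    (hf : ∀ t ∈ Set.Ioo 0 δ, f (x + t • v) = b) (hx : f x ≠ b) : ¬ContinuousAt f x := by
  intro hcont
  have hray : Tendsto (fun t : ℝ => x + t • v) (𝓝[>] 0) (𝓝 x) := by
    have h : Tendsto (fun t : ℝ => x + t • v) (𝓝 0) (𝓝 (x + (0 : ℝ) • v)) :=
      tendsto_const_nhds.add (tendsto_id.smul_const v)
    rw [zero_smul, add_zero] at h
    exact h.mono_left nhdsWithin_le_nhds
  refine hx (tendsto_nhds_unique (hcont.tendsto.comp hray) (tendsto_const_nhds.congr' ?_))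
  exact eventuallyEq_of_mem (Ioo_mem_nhdsGT hδ) fun t ht => (hf t ht).symm

/-- Proposition 2 of the paper: with uniform mixing on `[0,1]`, the Mixup-optimal
classifier for the cross dataset equals `(1/2, 1/2)` near the origin, equals `(1, 0)` on
the rest of the open segment between `(0,1)` and `(0,-1)`, and is hence discontinuous at
the origin. -/
theorem mixup_optimal_discontinuous :
    (∃ ε₀ > (0 : ℝ), ∀ ε : ℝ, 0 < ε → ε ≤ ε₀ →
        hEps (volume.restrict (Set.Icc (0 : ℝ) 1)) 4 Xcross 0
            (0 : EuclideanSpace ℝ (Fin 2)) ε = 1 / 2 ∧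
        hEps (volume.restrict (Set.Icc (0 : ℝ) 1)) 4 Xcross 1
            (0 : EuclideanSpace ℝ (Fin 2)) ε = 1 / 2) ∧
    (∀ t : ℝ, 0 < |t| → |t| < 1 → ∃ ε₀ > (0 : ℝ), ∀ ε : ℝ, 0 < ε → ε ≤ ε₀ →
        hEps (volume.restrict (Set.Icc (0 : ℝ) 1)) 4 Xcross 0 (pt 0 t) ε = 1 ∧
        hEps (volume.restrict (Set.Icc (0 : ℝ) 1)) 4 Xcross 1 (pt 0 t) ε = 0) ∧
    ¬ContinuousAt
      (fun x : EuclideanSpace ℝ (Fin 2) =>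
        limUnder (nhdsWithin 0 (Set.Ioi 0))
          (fun ε => hEps (volume.restrict (Set.Icc (0 : ℝ) 1)) 4 Xcross 0 x ε))
      (0 : EuclideanSpace ℝ (Fin 2)) := by
  have origin : ∃ ε₀ > (0 : ℝ), ∀ ε : ℝ, 0 < ε → ε ≤ ε₀ →
      hEps 𝒰 4 Xcross 0 0 ε = 1 / 2 ∧ hEps 𝒰 4 Xcross 1 0 ε = 1 / 2 :=
    ⟨1 / 2, by norm_num, fun ε hε hε₁ =>
      ⟨hEps_Xcross_origin hε hε₁ 0, hEps_Xcross_origin hε hε₁ 1⟩⟩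
  have segment : ∀ t : ℝ, 0 < |t| → |t| < 1 → ∃ ε₀ > (0 : ℝ), ∀ ε : ℝ, 0 < ε → ε ≤ ε₀ →
      hEps 𝒰 4 Xcross 0 (pt 0 t) ε = 1 ∧ hEps 𝒰 4 Xcross 1 (pt 0 t) ε = 0 :=
    fun t ht₀ ht₁ => ⟨min |t| ((1 - |t|) / 2), lt_min ht₀ (by linarith), fun ε hε hε₁ =>
      hEps_Xcross_segment hε (hε₁.trans (min_le_left _ _)) (hε₁.trans (min_le_right _ _))⟩
  refine ⟨origin, segment, not_continuousAt_of_eq_on_ray (v := pt 0 1) one_pos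
    (b := 1) (fun t ht => ?_) ?_⟩
  · rw [Set.mem_Ioo, ← abs_of_pos ht.1] at ht
    obtain ⟨ε₀, hε₀, h⟩ := segment t ht.1 ht.2
    rw [zero_add, ← pt_zero_eq_smul]
    exact limUnder_nhdsGT_eq hε₀ fun ε hε => (h ε hε.1 hε.2.le).1
  · obtain ⟨ε₀, hε₀, h⟩ := origin
    rw [limUnder_nhdsGT_eq hε₀ fun ε hε => (h ε hε.1 hε.2.le).1]
    norm_num
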